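/- Let (Ω, μ) be a probability space, let n, k be natural numbers with k ≥ 1, and let Y₁, …, Yₙ : Ω → ℝ be measurable random variables each taking only the values 0 and 1. Set X = ∑_{i=1}^n Y i. Then E[X^k] = ∑_{m=1}^{k} S(k,m) · (∑_{A ⊆ {1,…,n}, |A| = m} E[∏_{i ∈ A} Y i]), where E denotes integration with respect to μ and the inner sum ranges over all m-element subsets A of {1,…,n}. -/

import Mathlib

open Finset MeasureTheory

/-- `S k m` is the number of surjections from a `k`-element set onto an `m`-element set. -/
noncomputable def surjCount (k m : ℕ) : ℕ :=
  Nat.card {f : Fin k → Fin m // Function.Surjective f}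

lemma surjCount_eq_zero_of_lt {k m : ℕ} (h : k < m) : surjCount k m = 0 := by
  have : IsEmpty {f : Fin k → Fin m // Function.Surjective f} := by
    constructor
    rintro ⟨f, hf⟩
    have := Fintype.card_le_of_surjective f hf
    simp at this
    omega
  simp [surjCount, Nat.card_of_isEmpty]

lemma surjCount_zero_right {k : ℕ} (hk : 1 ≤ k) : surjCount k 0 = 0 := by
  have : IsEmpty {f : Fin k → Fin 0 // Function.Surjective f} := by
    constructor
    rintro ⟨f, -⟩
    exact (f ⟨0, hk⟩).elim0
  simp [surjCount, Nat.card_of_isEmpty]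

/-- The number of functions `Fin k → Fin n` whose image is exactly `A` equals
the number of surjections onto a set of size `#A`. -/
lemma card_image_eq_filter (n k : ℕ) (A : Finset (Fin n)) :
    #{p ∈ (univ : Finset (Fin k → Fin n)) | image p univ = A} = surjCount k #A := by
  classical
  rw [← Fintype.card_subtype, ← Nat.card_eq_fintype_card, surjCount]
  refine Nat.card_congr ?_
  have e₁ : {p : Fin k → Fin n // image p univ = A} ≃
      {q : Fin k → A // Function.Surjective q} := by
    refine ⟨fun p => ⟨fun j => ⟨p.1 j, ?_⟩, ?_⟩, fun q => ⟨fun j => (q.1 j : Fin n), ?_⟩, ?_, ?_⟩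
    · have := mem_image_of_mem p.1 (mem_univ j); rwa [p.2] at this
    · rintro ⟨a, ha⟩
      rw [← p.2] at ha
      obtain ⟨j, -, hj⟩ := mem_image.1 ha
      exact ⟨j, Subtype.ext hj⟩
    · ext x
      simp only [mem_image, mem_univ, true_and]
      constructor
      · rintro ⟨j, rfl⟩; exact (q.1 j).2
      · intro hx
        obtain ⟨j, hj⟩ := q.2 ⟨x, hx⟩
        exact ⟨j, congrArg Subtype.val hj⟩
    · intro p; ext j; rfl
    · intro q; ext j; rfl
  have e₂ : {q : Fin k → A // Function.Surjective q} ≃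
      {f : Fin k → Fin #A // Function.Surjective f} := by
    refine ⟨fun q => ⟨A.equivFin ∘ q.1, A.equivFin.surjective.comp q.2⟩,
      fun f => ⟨A.equivFin.symm ∘ f.1, A.equivFin.symm.surjective.comp f.2⟩, ?_, ?_⟩
    · intro q; ext j; simp
    · intro f; ext j; simp
  exact e₁.trans e₂

/-- The key pointwise combinatorial identity for `{0,1}`-valued tuples. -/
lemma pointwise_identity (n k : ℕ) (hk : 1 ≤ k) (y : Fin n → ℝ)
    (hy : ∀ i, y i = 0 ∨ y i = 1) :
    (∑ i, y i) ^ k =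
      ∑ m ∈ Finset.Icc 1 k,
        (surjCount k m : ℝ) * ∑ A ∈ Finset.univ.powersetCard m, ∏ i ∈ A, y i := by
  classical
  have hpow : ∀ i (e : ℕ), e ≠ 0 → y i ^ e = y i := by
    intro i e he
    rcases hy i with h | h <;> simp [h, zero_pow he]
  rw [Fintype.sum_pow]
  -- each product over `Fin k` collapses to a product over the image
  have hstep : ∀ p : Fin k → Fin n, (∏ j, y (p j)) = ∏ i ∈ image p univ, y i := by
    intro p
    rw [Finset.prod_comp]
    refine Finset.prod_congr rfl fun b hb => ?_
    refine hpow b _ ?_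
    obtain ⟨a, -, ha⟩ := mem_image.1 hb
    simp only [ne_eq, Finset.card_eq_zero, Finset.filter_eq_empty_iff, not_forall]
    exact ⟨a, mem_univ a, fun h => h ha⟩
  simp_rw [hstep]
  rw [Finset.sum_comp (fun A : Finset (Fin n) => ∏ i ∈ A, y i) (fun p => image p univ)]
  -- extend the sum to the whole powerset
  rw [Finset.sum_subset (Finset.subset_univ _) (fun A _ hA => ?_)]
  swap
  · suffices h : #{p ∈ (univ : Finset (Fin k → Fin n)) | image p univ = A} = 0 by
      rw [h, zero_smul]
    rw [Finset.card_eq_zero, Finset.filter_eq_empty_iff]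
    intro p _ hp
    exact hA (hp ▸ mem_image_of_mem _ (mem_univ p))
  -- now rewrite the counts
  have : ∀ A : Finset (Fin n),
      #{p ∈ (univ : Finset (Fin k → Fin n)) | image p univ = A} •
        (∏ i ∈ A, y i) = (surjCount k #A : ℝ) * ∏ i ∈ A, y i := by
    intro A
    rw [card_image_eq_filter, nsmul_eq_mul]
  -- `univ` here is the powerset of `univ`
  rw [show (univ : Finset (Finset (Fin n))) = (univ : Finset (Fin n)).powerset from
    (Finset.powerset_univ).symm]
  simp_rw [this]
  -- group by cardinality
  rw [Finset.powerset_card_biUnion, Finset.sum_biUnion ((Finset.pairwise_disjoint_powersetCard _).set_pairwise _)]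
  simp_rw [Finset.mul_sum]
  -- change index set from `range (n+1)` to `Icc 1 k`
  have key : ∀ m : ℕ, (∑ A ∈ (univ : Finset (Fin n)).powersetCard m,
      (surjCount k #A : ℝ) * ∏ i ∈ A, y i) =
      ∑ A ∈ (univ : Finset (Fin n)).powersetCard m,
      (surjCount k m : ℝ) * ∏ i ∈ A, y i := by
    intro m
    refine Finset.sum_congr rfl fun A hA => ?_
    rw [(Finset.mem_powersetCard.1 hA).2]
  simp_rw [key]
  -- both sides equal the sum over `range (max n k + 1)`
  have h1 : ∀ m ∈ Finset.range (max n k + 1), m ∉ Finset.range (n + 1) →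
      (∑ A ∈ (univ : Finset (Fin n)).powersetCard m,
        (surjCount k m : ℝ) * ∏ i ∈ A, y i) = 0 := by
    intro m _ hm
    rw [Finset.powersetCard_eq_empty.2, Finset.sum_empty]
    simp only [Finset.mem_range, not_lt] at hm
    simpa using hm
  have h2 : ∀ m ∈ Finset.range (max n k + 1), m ∉ Finset.Icc 1 k →
      (∑ A ∈ (univ : Finset (Fin n)).powersetCard m,
        (surjCount k m : ℝ) * ∏ i ∈ A, y i) = 0 := by
    intro m _ hm
    simp only [Finset.mem_Icc, not_and, not_le] at hm
    have hcount : surjCount k m = 0 := by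
      rcases Nat.eq_zero_or_pos m with h | h
      · subst h; exact surjCount_zero_right hk
      · exact surjCount_eq_zero_of_lt (hm h)
    simp [hcount]
  rw [Finset.card_univ, Fintype.card_fin]
  rw [Finset.sum_subset (Finset.range_subset_range.2 (by omega) :
      Finset.range (n + 1) ⊆ Finset.range (max n k + 1)) h1,
    Finset.sum_subset (show Finset.Icc 1 k ⊆ Finset.range (max n k + 1) by
      intro x hx; simp only [Finset.mem_Icc] at hx; simp only [Finset.mem_range]; omega) h2]

theorem bernoulli_sum_moment {Ω : Type*} [MeasurableSpace Ω] (μ : Measure Ω)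
    [IsProbabilityMeasure μ] (n k : ℕ) (hk : 1 ≤ k) (Y : Fin n → Ω → ℝ)
    (hmeas : ∀ i, Measurable (Y i)) (h01 : ∀ i ω, Y i ω = 0 ∨ Y i ω = 1) :
    (∫ ω, (∑ i, Y i ω) ^ k ∂μ) =
      ∑ m ∈ Finset.Icc 1 k,
        (surjCount k m : ℝ) *
          ∑ A ∈ Finset.univ.powersetCard m, ∫ ω, ∏ i ∈ A, Y i ω ∂μ := by
  have hint : ∀ A : Finset (Fin n), Integrable (fun ω => ∏ i ∈ A, Y i ω) μ := by
    intro A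
    refine (integrable_const (1 : ℝ)).mono' ?_ ?_
    · exact (Finset.measurable_prod A fun i _ => hmeas i).aestronglyMeasurable
    · filter_upwards with ω
      rw [Real.norm_eq_abs, Finset.abs_prod]
      calc ∏ i ∈ A, |Y i ω| ≤ ∏ i ∈ A, 1 := by
            refine Finset.prod_le_prod (fun i _ => abs_nonneg _) fun i _ => ?_
            rcases h01 i ω with h | h <;> simp [h]
        _ = 1 := by simp
  have hptw : ∀ ω, (∑ i, Y i ω) ^ k =
      ∑ m ∈ Finset.Icc 1 k,
        (surjCount k m : ℝ) * ∑ A ∈ Finset.univ.powersetCard m, ∏ i ∈ A, Y i ω := by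
    intro ω
    exact pointwise_identity n k hk (fun i => Y i ω) (fun i => h01 i ω)
  calc (∫ ω, (∑ i, Y i ω) ^ k ∂μ)
      = ∫ ω, ∑ m ∈ Finset.Icc 1 k,
          (surjCount k m : ℝ) * ∑ A ∈ Finset.univ.powersetCard m, ∏ i ∈ A, Y i ω ∂μ := by
        exact integral_congr_ae (Filter.Eventually.of_forall hptw)
    _ = ∑ m ∈ Finset.Icc 1 k, ∫ ω,
          (surjCount k m : ℝ) * ∑ A ∈ Finset.univ.powersetCard m, ∏ i ∈ A, Y i ω ∂μ := by
        refine integral_finset_sum _ fun m _ => ?_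
        exact (integrable_finset_sum _ fun A _ => hint A).const_mul _
    _ = ∑ m ∈ Finset.Icc 1 k,
          (surjCount k m : ℝ) * ∑ A ∈ Finset.univ.powersetCard m, ∫ ω, ∏ i ∈ A, Y i ω ∂μ := by
        refine Finset.sum_congr rfl fun m _ => ?_
        rw [integral_const_mul, integral_finset_sum _ fun A _ => hint A]
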